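/- arXiv:1506.05317 — 7 statements merged into one kernel-verified Lean document; each statement's English description precedes it below -/
import Mathlib

section
/- Three-term recurrence for characteristic polynomials of tridiagonal k-Toeplitz matrices (Theorem 1 together with Corollary 1): with p_0(z) := 1, for every n ≥ 1 and every z ∈ ℂ, p_{n+1}(z) = Q^k(z)·p_n(z) + γ·p_{n−1}(z), where Q^k(z) = trace(U_k(z)) and γ = −(u_1·u_2⋯u_k). -/
/-!
Three-term recurrence for characteristic polynomials of tridiagonal k-Toeplitz
matrices (Theorem 1 together with Corollary 1).

The tridiagonal `k`-Toeplitz matrix of dimension `N` has (0-indexed) entries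
`a (i % k)` on the diagonal, `x (i % k)` on the superdiagonal (row `i`),
`y (i % k)` on the subdiagonal (column `i`); here `a j, x j, y j` correspond to
`a_{j+1}, x_{j+1}, y_{j+1}` of the paper.
-/

open Matrix

/-- The tridiagonal `k`-Toeplitz matrix `M_N`. -/
noncomputable def kToeplitz (k : ℕ) (a x y : ℕ → ℂ) (N : ℕ) :
    Matrix (Fin N) (Fin N) ℂ :=
  Matrix.of fun i j =>
    if (i : ℕ) = (j : ℕ) then a ((i : ℕ) % k)
    else if (j : ℕ) = (i : ℕ) + 1 then x ((i : ℕ) % k)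
    else if (i : ℕ) = (j : ℕ) + 1 then y ((j : ℕ) % k)
    else 0

/-- `p_n(z) = det (z • I_{nk} + M_{nk})`; in particular `p_0 = 1`. -/
noncomputable def pPoly (k : ℕ) (a x y : ℕ → ℂ) (n : ℕ) (z : ℂ) : ℂ :=
  (z • (1 : Matrix (Fin (n * k)) (Fin (n * k)) ℂ) + kToeplitz k a x y (n * k)).det

/-- The elementary reduction matrix `U₁(a,u)(z) = [[z+a, -u],[1,0]]`. -/
noncomputable def U1 (a u z : ℂ) : Matrix (Fin 2) (Fin 2) ℂ :=
  !![z + a, -u; 1, 0]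

/-- The reduction matrix `U_k(z) = U₁(a_1,u_1)(z) ⋯ U₁(a_k,u_k)(z)`
(with the factor `j = 1`, i.e. index `0`, leftmost). -/
noncomputable def Uk (k : ℕ) (a x y : ℕ → ℂ) (z : ℂ) : Matrix (Fin 2) (Fin 2) ℂ :=
  ((List.range k).map (fun j => U1 (a j) (x j * y j) z)).prod

namespace KTaux

variable (k : ℕ) (a x y : ℕ → ℂ) (z : ℂ)

noncomputable def ent (p q : ℕ) : ℂ :=
  if p = q then z + a (p % k)
  else if q = p + 1 then x (p % k)
  else if p = q + 1 then y (q % k)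
  else 0

noncomputable def Tg (s m : ℕ) : Matrix (Fin m) (Fin m) ℂ :=
  Matrix.of fun i j => ent k a x y z (s + (i : ℕ)) (s + (j : ℕ))

noncomputable def Dg (s m : ℕ) : ℂ := (Tg k a x y z s m).det

lemma ent_add_k (p q : ℕ) : ent k a x y z (p + k) (q + k) = ent k a x y z p q := by
  have e1 : p + k = q + k ↔ p = q := by omega
  have e2 : q + k = p + k + 1 ↔ q = p + 1 := by omega
  have e3 : p + k = q + k + 1 ↔ p = q + 1 := by omega
  simp only [ent, Nat.add_mod_right, e1, e2, e3]

lemma Dg_add_k (s m : ℕ) : Dg k a x y z (s + k) m = Dg k a x y z s m := by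
  unfold Dg
  congr 1
  ext i j
  have h1 : s + k + (i : ℕ) = s + (i : ℕ) + k := by omega
  have h2 : s + k + (j : ℕ) = s + (j : ℕ) + k := by omega
  simp only [Tg, Matrix.of_apply, h1, h2, ent_add_k]

lemma Dg_add_mul_k (s m t : ℕ) : Dg k a x y z (s + t * k) m = Dg k a x y z s m := by
  induction t with
  | zero => simp
  | succ t ih =>
      have : s + (t + 1) * k = s + t * k + k := by ring
      rw [this, Dg_add_k, ih]

lemma Dg_zero (s : ℕ) : Dg k a x y z s 0 = 1 := Matrix.det_fin_zero

lemma Dg_one (s : ℕ) : Dg k a x y z s 1 = z + a (s % k) := by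
  rw [Dg, Matrix.det_fin_one]
  simp [Tg, ent]

lemma ent_ne (p q : ℕ) (h1 : p ≠ q) (h2 : q ≠ p + 1) (h3 : p ≠ q + 1) :
    ent k a x y z p q = 0 := by
  simp only [ent, if_neg h1, if_neg h2, if_neg h3]

lemma Dg_step (s m : ℕ) :
    Dg k a x y z s (m + 2) =
      (z + a (s % k)) * Dg k a x y z (s + 1) (m + 1)
        - x (s % k) * y (s % k) * Dg k a x y z (s + 2) m := by
  set A := Tg k a x y z s (m + 2) with hA
  have hdet := Matrix.det_succ_row_zero A
  rw [Fin.sum_univ_succ, Fin.sum_univ_succ] at hdet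
  -- tail vanishes
  have htail : ∀ j : Fin m,
      (-1 : ℂ) ^ ((j.succ.succ : Fin (m+2)) : ℕ) * A 0 j.succ.succ *
        (A.submatrix Fin.succ (j.succ.succ).succAbove).det = 0 := by
    intro j
    have : A 0 j.succ.succ = 0 := by
      show ent k a x y z (s + ((0 : Fin (m+2)) : ℕ)) (s + ((j.succ.succ : Fin (m+2)) : ℕ)) = 0
      apply ent_ne
      all_goals (simp only [Fin.val_succ, Fin.val_zero]; omega)
    rw [this]; ring
  rw [Finset.sum_eq_zero (fun j _ => htail j)] at hdet
  -- entries in the first row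
  have hA00 : A 0 0 = z + a (s % k) := by
    show ent k a x y z (s + ((0 : Fin (m+2)) : ℕ)) (s + ((0 : Fin (m+2)) : ℕ)) = _
    simp [ent]
  have hA01 : A 0 (Fin.succ (0 : Fin (m+1))) = x (s % k) := by
    show ent k a x y z (s + ((0 : Fin (m+2)) : ℕ)) (s + ((Fin.succ (0 : Fin (m+1)) : Fin (m+2)) : ℕ)) = _
    have h1 : s + ((0 : Fin (m+2)) : ℕ) = s := by simp
    have h2 : s + ((Fin.succ (0 : Fin (m+1)) : Fin (m+2)) : ℕ) = s + 1 := by simp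
    rw [h1, h2]
    simp [ent]
  -- first minor
  have hminor1 : (A.submatrix Fin.succ (Fin.succAbove 0)).det = Dg k a x y z (s+1) (m+1) := by
    rw [Fin.succAbove_zero]
    unfold Dg
    congr 1
    ext i j
    show ent k a x y z (s + ((i.succ : Fin (m+2)) : ℕ)) (s + ((j.succ : Fin (m+2)) : ℕ)) = _
    have h1 : s + ((i.succ : Fin (m+2)) : ℕ) = (s+1) + (i : ℕ) := by simp [Fin.val_succ]; omega
    have h2 : s + ((j.succ : Fin (m+2)) : ℕ) = (s+1) + (j : ℕ) := by simp [Fin.val_succ]; omega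
    rw [h1, h2]; rfl
  -- second minor
  have hminor2 : (A.submatrix Fin.succ (Fin.succ (0 : Fin (m+1))).succAbove).det
      = y (s % k) * Dg k a x y z (s+2) m := by
    set B := A.submatrix Fin.succ (Fin.succ (0 : Fin (m+1))).succAbove with hB
    have hd := Matrix.det_succ_column_zero B
    rw [Fin.sum_univ_succ] at hd
    have hB00 : B 0 0 = y (s % k) := by
      rw [hB]
      show A (Fin.succ 0) ((Fin.succ (0 : Fin (m+1))).succAbove 0) = _
      rw [Fin.succ_succAbove_zero]
      show ent k a x y z (s + ((Fin.succ (0:Fin (m+1)) : Fin (m+2)) : ℕ)) (s + ((0 : Fin (m+2)) : ℕ)) = _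
      have h1 : s + ((Fin.succ (0:Fin (m+1)) : Fin (m+2)) : ℕ) = s + 1 := by simp
      have h2 : s + ((0 : Fin (m+2)) : ℕ) = s := by simp
      rw [h1, h2]
      have e1 : s + 1 ≠ s := by omega
      have e2 : ¬ (s = s + 1 + 1) := by omega
      have e3 : s + 1 = s + 1 := rfl
      simp [ent, e1, e2]
    have hBtail : ∀ i : Fin m,
        (-1 : ℂ) ^ ((i.succ : Fin (m+1)) : ℕ) * B i.succ 0 *
          (B.submatrix (i.succ).succAbove Fin.succ).det = 0 := by
      intro i
      have : B i.succ 0 = 0 := by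
        rw [hB]
        show A (Fin.succ i.succ) ((Fin.succ (0 : Fin (m+1))).succAbove 0) = _
        rw [Fin.succ_succAbove_zero]
        show ent k a x y z (s + ((Fin.succ i.succ : Fin (m+2)) : ℕ)) (s + ((0 : Fin (m+2)) : ℕ)) = _
        apply ent_ne
        all_goals (simp only [Fin.val_succ, Fin.val_zero]; omega)
      rw [this]; ring
    rw [Finset.sum_eq_zero (fun i _ => hBtail i)] at hd
    have hBminor : (B.submatrix (0 : Fin (m+1)).succAbove Fin.succ).det = Dg k a x y z (s+2) m := by
      rw [Fin.succAbove_zero]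
      unfold Dg
      congr 1
      ext i j
      show B i.succ j.succ = _
      rw [hB]
      show A (Fin.succ i.succ) ((Fin.succ (0 : Fin (m+1))).succAbove j.succ) = _
      rw [Fin.succ_succAbove_succ, Fin.succAbove_zero]
      show ent k a x y z (s + ((Fin.succ i.succ : Fin (m+2)) : ℕ)) (s + ((Fin.succ j.succ : Fin (m+2)) : ℕ)) = _
      have h1 : s + ((Fin.succ i.succ : Fin (m+2)) : ℕ) = (s+2) + (i : ℕ) := by
        simp only [Fin.val_succ]; omega
      have h2 : s + ((Fin.succ j.succ : Fin (m+2)) : ℕ) = (s+2) + (j : ℕ) := by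
        simp only [Fin.val_succ]; omega
      rw [h1, h2]; rfl
    rw [hB00, hBminor] at hd
    simpa using hd
  rw [hA00, hA01, hminor1, hminor2] at hdet
  show A.det = _
  rw [hdet]
  simp only [Fin.val_zero, Fin.val_succ, pow_zero, pow_succ, pow_zero]
  ring

/-- `h m = D` of size `m` with offset `m*(k-1)` (≡ `-m` mod `k`). -/
noncomputable def hseq (m : ℕ) : ℂ := Dg k a x y z (m * (k - 1)) m

noncomputable def wseq : ℕ → Fin 2 → ℂ
  | 0 => ![1, 0]
  | (m + 1) => ![hseq k a x y z (m + 1), hseq k a x y z m]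

lemma hseq_step (hk : 1 ≤ k) (m : ℕ) :
    hseq k a x y z (m + 2) =
      (z + a ((m + 2) * (k - 1) % k)) * hseq k a x y z (m + 1)
        - x ((m + 2) * (k - 1) % k) * y ((m + 2) * (k - 1) % k) * hseq k a x y z m := by
  obtain ⟨K, rfl⟩ : ∃ K, k = K + 1 := ⟨k - 1, by omega⟩
  unfold hseq
  rw [Dg_step]
  have e0 : K + 1 - 1 = K := by omega
  have e1 : (m + 2) * (K + 1 - 1) + 1 = (m + 1) * (K + 1 - 1) + (K + 1) := by
    rw [e0]; ring
  have e2 : (m + 2) * (K + 1 - 1) + 2 = m * (K + 1 - 1) + 2 * (K + 1) := by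
    rw [e0]; ring
  rw [e1, e2, Dg_add_k, show m * (K+1-1) + 2 * (K+1) = m * (K+1-1) + (K+1) + (K+1) by ring,
    Dg_add_k, Dg_add_k]

lemma wseq_succ (hk : 1 ≤ k) (m : ℕ) :
    wseq k a x y z (m + 1) =
      U1 (a ((m + 1) * (k - 1) % k)) (x ((m + 1) * (k - 1) % k) * y ((m + 1) * (k - 1) % k)) z
        *ᵥ wseq k a x y z m := by
  cases m with
  | zero =>
      show wseq k a x y z 1 = _ *ᵥ ![1, 0]
      have h1 : hseq k a x y z 1 = z + a (1 * (k - 1) % k) := by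
        unfold hseq; rw [Dg_one]
      have h0 : hseq k a x y z 0 = 1 := by unfold hseq; rw [Dg_zero]
      show ![hseq k a x y z 1, hseq k a x y z 0] = _
      rw [h1, h0]
      ext i
      fin_cases i <;>
        simp [U1, Matrix.mulVec, dotProduct, Fin.sum_univ_two]
  | succ m =>
      show ![hseq k a x y z (m + 2), hseq k a x y z (m + 1)] = _ *ᵥ ![hseq k a x y z (m+1), hseq k a x y z m]
      rw [hseq_step k a x y z hk m]
      ext i
      fin_cases i <;>
        (simp [U1, Matrix.mulVec, dotProduct, Fin.sum_univ_two]; try ring)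

lemma wseq_add (hk : 1 ≤ k) (m r : ℕ) :
    wseq k a x y z (m + r) =
      (((List.range r).map (fun j =>
        U1 (a ((m + j + 1) * (k - 1) % k))
           (x ((m + j + 1) * (k - 1) % k) * y ((m + j + 1) * (k - 1) % k)) z)).reverse.prod)
        *ᵥ wseq k a x y z m := by
  induction r with
  | zero => simp
  | succ r ih =>
      rw [List.range_succ, List.map_append, List.reverse_append]
      simp only [List.map_cons, List.map_nil, List.reverse_cons, List.reverse_nil,
        List.nil_append, List.singleton_append, List.prod_cons]
      rw [← Matrix.mulVec_mulVec, ← ih, show m + (r + 1) = (m + r) + 1 by ring,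
        wseq_succ k a x y z hk (m + r), show m + r + 1 = m + (r+1) by ring]

lemma idx_lemma (hk : 1 ≤ k) (n i : ℕ) (hi : i < k) :
    (n * k + (k - 1 - i) + 1) * (k - 1) % k = i := by
  obtain ⟨K, rfl⟩ : ∃ K, k = K + 1 := ⟨k - 1, by omega⟩
  obtain ⟨d, rfl⟩ : ∃ d, K = i + d := ⟨K - i, by omega⟩
  rw [show i + d + 1 - 1 - i = d from by omega, show i + d + 1 - 1 = i + d from by omega,
    show (n * (i + d + 1) + d + 1) * (i + d) = (n * (i + d) + d) * (i + d + 1) + i from by ring,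
    Nat.mul_add_mod']
  exact Nat.mod_eq_of_lt (by omega)

lemma key_list (hk : 1 ≤ k) (n : ℕ) :
    ((List.range k).map (fun j =>
        U1 (a ((n * k + j + 1) * (k - 1) % k))
           (x ((n * k + j + 1) * (k - 1) % k) * y ((n * k + j + 1) * (k - 1) % k)) z)).reverse
      = (List.range k).map (fun j => U1 (a j) (x j * y j) z) := by
  apply List.ext_getElem
  · simp
  · intro i h1 h2
    have hik : i < k := by simpa using h2
    simp only [List.getElem_reverse, List.length_map, List.length_range, List.getElem_map,
      List.getElem_range]
    rw [idx_lemma k hk n i hik]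

lemma wseq_period (hk : 1 ≤ k) (n : ℕ) :
    wseq k a x y z ((n + 1) * k) = Uk k a x y z *ᵥ wseq k a x y z (n * k) := by
  have h := wseq_add k a x y z hk (n * k) k
  rw [key_list k a x y z hk n] at h
  rw [show (n + 1) * k = n * k + k from by ring, h, Uk]

lemma wseq_fst (M : ℕ) : wseq k a x y z M 0 = hseq k a x y z M := by
  cases M with
  | zero =>
      show (![1, 0] : Fin 2 → ℂ) 0 = hseq k a x y z 0
      unfold hseq
      rw [Dg_zero]
      simp
  | succ m => rfl

lemma det_list_prod' (l : List (Matrix (Fin 2) (Fin 2) ℂ)) :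
    l.prod.det = (l.map Matrix.det).prod := by
  induction l with
  | nil => simp
  | cons A l ih => simp [Matrix.det_mul, ih]

lemma list_range_prod (f : ℕ → ℂ) (n : ℕ) :
    ((List.range n).map f).prod = ∏ j ∈ Finset.range n, f j := by
  induction n with
  | zero => simp
  | succ n ih =>
      rw [List.range_succ, List.map_append, List.prod_append, Finset.prod_range_succ, ih]
      simp

lemma Uk_det : (Uk k a x y z).det = ∏ j ∈ Finset.range k, x j * y j := by
  rw [Uk, det_list_prod', List.map_map]
  have h : (Matrix.det ∘ fun j => U1 (a j) (x j * y j) z) = fun j => x j * y j := by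
    funext j
    simp [U1, Matrix.det_fin_two_of]
  rw [h, list_range_prod]

lemma pPoly_eq (hk : 1 ≤ k) (N : ℕ) :
    pPoly k a x y N z = wseq k a x y z (N * k) 0 := by
  rw [wseq_fst]
  unfold hseq
  have h1 : Dg k a x y z (N * k * (k - 1)) (N * k) = Dg k a x y z 0 (N * k) := by
    have h := Dg_add_mul_k k a x y z 0 (N * k) (N * (k - 1))
    rw [show (0 : ℕ) + N * (k - 1) * k = N * k * (k - 1) from by ring] at h
    exact h
  rw [h1]
  unfold pPoly Dg
  congr 1
  ext i j
  simp only [Matrix.add_apply, Matrix.smul_apply, kToeplitz, Matrix.of_apply, Tg,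
    Nat.zero_add, ent, smul_eq_mul]
  by_cases hij : (i : ℕ) = (j : ℕ)
  · have hij' : i = j := Fin.ext hij
    subst hij'
    rw [Matrix.one_apply_eq]
    simp
  · have hne : i ≠ j := fun h => hij (by rw [h])
    rw [Matrix.one_apply_ne hne]
    simp [hij]

end KTaux

/-- **Theorem 1 + Corollary 1**: with `p_0 := 1`, for every `n ≥ 1` and `z ∈ ℂ`,
`p_{n+1}(z) = Q^k(z) · p_n(z) + γ · p_{n-1}(z)` where `Q^k(z) = trace (U_k(z))`
and `γ = -(u_1 ⋯ u_k)`. -/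
theorem kToeplitz_charpoly_three_term_recurrence
    (k : ℕ) (hk : 1 ≤ k) (a x y : ℕ → ℂ) (n : ℕ) (hn : 1 ≤ n) (z : ℂ) :
    pPoly k a x y (n + 1) z =
      (Uk k a x y z).trace * pPoly k a x y n z +
        (-(∏ j ∈ Finset.range k, x j * y j)) * pPoly k a x y (n - 1) z := by
  obtain ⟨m, rfl⟩ : ∃ m, n = m + 1 := ⟨n - 1, by omega⟩
  have e : m + 1 - 1 = m := rfl
  rw [e]
  rw [KTaux.pPoly_eq k a x y z hk (m + 1 + 1), KTaux.pPoly_eq k a x y z hk (m + 1),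
    KTaux.pPoly_eq k a x y z hk m]
  have h2 := KTaux.wseq_period k a x y z hk (m + 1)
  have h1 := KTaux.wseq_period k a x y z hk m
  rw [h2, h1]
  have hdet := KTaux.Uk_det k a x y z
  rw [Matrix.det_fin_two] at hdet
  rw [Matrix.trace_fin_two, ← hdet]
  simp only [Matrix.mulVec, dotProduct, Fin.sum_univ_two]
  ring
end

section
/- Matrix-power formula for characteristic polynomials (Corollary 2): for every n ≥ 1 and every z ∈ ℂ, (p_n(z), q_n(z))ᵀ = U_k(z)^{n−1} · U₁(a_1,u_1)(z)·U₁(a_2,u_2)(z)···U₁(a_{k−1},u_{k−1})(z) · (z + a_k, 1)ᵀ. -/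
/-!
Laplace expansion of a tridiagonal determinant `D` along its first row gives the three-term
recurrence `D = d₀ D' - s₀ t₀ D''`, where `D'` and `D''` are the determinants of the trailing
principal submatrices of size one and two less. In vector form this reads
`(D, D') = [[d₀, -s₀ t₀], [1, 0]] · (D', D'')`, hence `(p_n, q_n)` is the product of the
transfer matrices `U₁(a_j, u_j)(z)`, `j = 1, …, nk - 1` (indices mod `k`), applied to
`(z + a_k, 1)`.
As the entries of `M_{nk}` are `k`-periodic, this product is `n - 1` full periods `U_k(z)`
followed by the first `k - 1` factors.
-/

open Matrix

/-- `q_n(z) = det (z • I_{nk-1} + M'_{nk-1})`, where `M'_{nk-1}` is the submatrix of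
`M_{nk}` obtained by deleting its first row and first column. -/
noncomputable def qPoly (k : ℕ) (a x y : ℕ → ℂ) (n : ℕ) (z : ℂ) : ℂ :=
  (z • (1 : Matrix (Fin (n * k - 1)) (Fin (n * k - 1)) ℂ) +
    (kToeplitz k a x y (n * k)).submatrix
      (fun i : Fin (n * k - 1) => (⟨(i : ℕ) + 1, by have := i.isLt; omega⟩ : Fin (n * k)))
      (fun j : Fin (n * k - 1) => (⟨(j : ℕ) + 1, by have := j.isLt; omega⟩ : Fin (n * k)))).det

section Tridiagonal

variable {R : Type*} [CommRing R]

def tridiag (d s t : ℕ → R) (m : ℕ) : Matrix (Fin m) (Fin m) R :=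
  Matrix.of fun i j =>
    if (i : ℕ) = j then d i
    else if (j : ℕ) = i + 1 then s i
    else if (i : ℕ) = j + 1 then t j
    else 0

theorem tridiag_submatrix_succ (d s t : ℕ → R) (m : ℕ) :
    (tridiag d s t (m + 1)).submatrix Fin.succ Fin.succ =
      tridiag (fun i => d (i + 1)) (fun i => s (i + 1)) (fun i => t (i + 1)) m := by
  ext i j
  simp [tridiag]

theorem smul_one_add_tridiag (c : R) (d s t : ℕ → R) (m : ℕ) :
    c • 1 + tridiag d s t m = tridiag (fun i => c + d i) s t m := by
  ext i j
  by_cases h : i = j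
  · subst h; simp [tridiag]
  · simp [tridiag, Matrix.one_apply_ne h, Fin.val_ne_of_ne h]

theorem det_tridiag_succ_succ (d s t : ℕ → R) (m : ℕ) :
    (tridiag d s t (m + 2)).det =
      d 0 * (tridiag (fun i => d (i + 1)) (fun i => s (i + 1)) (fun i => t (i + 1)) (m + 1)).det -
        s 0 * t 0 *
          (tridiag (fun i => d (i + 2)) (fun i => s (i + 2)) (fun i => t (i + 2)) m).det := by
  set A := tridiag d s t (m + 2)
  have minor_one : (A.submatrix Fin.succ (Fin.succAbove 1)).det =
      t 0 * (tridiag (fun i => d (i + 2)) (fun i => s (i + 2)) (fun i => t (i + 2)) m).det := by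
    have hsucc : (Fin.succAbove (1 : Fin (m + 2))) ∘ Fin.succ = Fin.succ ∘ Fin.succ := by
      funext j; exact Fin.succAbove_of_le_castSucc _ _ (by simp [Fin.le_def])
    rw [det_succ_column_zero, Fin.sum_univ_succ, Fin.succAbove_zero, submatrix_submatrix, hsucc,
      ← submatrix_submatrix, tridiag_submatrix_succ, tridiag_submatrix_succ]
    simp [A, tridiag]
  rw [det_succ_row_zero, Fin.sum_univ_succ, Fin.sum_univ_succ, Fin.succAbove_zero,
    tridiag_submatrix_succ, Fin.succ_zero_eq_one, minor_one]
  simp [A, tridiag]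
  ring

theorem det_tridiag_pair_eq_prod_mulVec (m : ℕ) (d s t : ℕ → R) :
    ![(tridiag d s t (m + 1)).det,
        (tridiag (fun i => d (i + 1)) (fun i => s (i + 1)) (fun i => t (i + 1)) m).det] =
      ((List.range m).map fun j => !![d j, -(s j * t j); 1, 0]).prod *ᵥ ![d m, 1] := by
  induction m generalizing d s t with
  | zero => ext i; fin_cases i <;> simp [tridiag]
  | succ m ih =>
    simp only [List.range_succ_eq_map, List.map_cons, List.map_map, Function.comp_def,
      Nat.succ_eq_add_one, List.prod_cons, ← mulVec_mulVec]
    rw [← ih (fun i => d (i + 1)) (fun i => s (i + 1)) (fun i => t (i + 1))]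
    ext i; fin_cases i
    · simp [det_tridiag_succ_succ, mulVec]
      ring
    · simp [mulVec]

end Tridiagonal

theorem List.prod_map_range_mul_add {M : Type*} [Monoid M] {f : ℕ → M} {k : ℕ}
    (hf : Function.Periodic f k) (m r : ℕ) :
    ((List.range (m * k + r)).map f).prod =
      ((List.range k).map f).prod ^ m * ((List.range r).map f).prod := by
  induction m with
  | zero => simp
  | succ m ih =>
    have hshift : f ∘ (k + ·) = f := funext fun j => by simpa [add_comm] using hf j
    rw [add_mul, one_mul, add_comm _ k, add_assoc, List.range_add, List.map_append,
      List.prod_append, List.map_map, hshift, ih, pow_succ', mul_assoc]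

section kToeplitz

variable (k : ℕ) (a x y : ℕ → ℂ) (n : ℕ) (z : ℂ)

theorem kToeplitz_eq_tridiag (N : ℕ) :
    kToeplitz k a x y N =
      tridiag (fun i => a (i % k)) (fun i => x (i % k)) (fun i => y (i % k)) N :=
  rfl

theorem pPoly_eq_det_tridiag :
    pPoly k a x y n z =
      (tridiag (fun i => z + a (i % k)) (fun i => x (i % k)) (fun i => y (i % k)) (n * k)).det := by
  rw [pPoly, kToeplitz_eq_tridiag, smul_one_add_tridiag]

theorem qPoly_eq_det_tridiag :
    qPoly k a x y n z =
      (tridiag (fun i => z + a ((i + 1) % k)) (fun i => x ((i + 1) % k)) (fun i => y ((i + 1) % k))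
        (n * k - 1)).det := by
  rw [qPoly, ← smul_one_add_tridiag]
  congr 2
  ext i j
  simp [kToeplitz, tridiag]

theorem charpoly_pair_eq_prod_mulVec {m : ℕ} (hm : n * k = m + 1) :
    ![pPoly k a x y n z, qPoly k a x y n z] =
      ((List.range m).map fun j => U1 (a (j % k)) (x (j % k) * y (j % k)) z).prod *ᵥ
        ![z + a (m % k), 1] := by
  rw [pPoly_eq_det_tridiag, qPoly_eq_det_tridiag, hm, Nat.add_sub_cancel]
  exact det_tridiag_pair_eq_prod_mulVec m _ _ _

theorem prod_range_U1_mod_mul_add (m : ℕ) {r : ℕ} (hr : r ≤ k) :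
    ((List.range (m * k + r)).map fun j => U1 (a (j % k)) (x (j % k) * y (j % k)) z).prod =
      Uk k a x y z ^ m * ((List.range r).map fun j => U1 (a j) (x j * y j) z).prod := by
  have periodic : Function.Periodic (fun j => U1 (a (j % k)) (x (j % k) * y (j % k)) z) k :=
    fun j => by simp
  have prod_congr : ∀ l ≤ k,
      ((List.range l).map fun j => U1 (a (j % k)) (x (j % k) * y (j % k)) z).prod =
        ((List.range l).map fun j => U1 (a j) (x j * y j) z).prod := fun l hl =>
    congrArg List.prod <| List.map_congr_left fun j hj => by
      rw [Nat.mod_eq_of_lt (lt_of_lt_of_le (List.mem_range.mp hj) hl)]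
  rw [List.prod_map_range_mul_add periodic, prod_congr k le_rfl, prod_congr r hr, Uk]

end kToeplitz

/-- **Corollary 2**: for every `n ≥ 1` and every `z ∈ ℂ`,
`(p_n(z), q_n(z))ᵀ = U_k(z)^{n-1} · U₁(a_1,u_1)(z) ⋯ U₁(a_{k-1},u_{k-1})(z) · (z + a_k, 1)ᵀ`
(for `k = 1` the product `U₁(a_1,u_1) ⋯ U₁(a_{k-1},u_{k-1})` is empty, i.e. the identity). -/
theorem kToeplitz_matrix_power_formula
    (k : ℕ) (hk : 1 ≤ k) (a x y : ℕ → ℂ) (n : ℕ) (hn : 1 ≤ n) (z : ℂ) :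
    ![pPoly k a x y n z, qPoly k a x y n z] =
      ((Uk k a x y z) ^ (n - 1) *
        ((List.range (k - 1)).map (fun j => U1 (a j) (x j * y j) z)).prod).mulVec
        ![z + a (k - 1), 1] := by
  have hm : n * k = ((n - 1) * k + (k - 1)) + 1 := by
    obtain ⟨n, rfl⟩ := Nat.exists_eq_add_of_le' hn
    simp only [Nat.add_sub_cancel, add_mul, one_mul]
    omega
  have hmod : ((n - 1) * k + (k - 1)) % k = k - 1 := by
    rw [Nat.mul_add_mod_self_right, Nat.mod_eq_of_lt (by omega)]
  rw [charpoly_pair_eq_prod_mulVec k a x y n z hm,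
    prod_range_U1_mod_mul_add k a x y z _ (by omega), hmod]
end

section
/- Corollary 5: let γ ∈ ℂ be nonzero and not a negative real number, let α = arg(γ) (so α ∈ (−π, π)), let θ ∈ ℝ and Q ∈ ℂ, and set r = √|γ|·e^{iθ}. If r² − Q·r − γ = 0, then Q = √|γ|·(i + e^{i(α+π/2)})·(sin θ − tan(α/2)·cos θ); in particular Q is a real scalar multiple of the fixed nonzero complex number i + e^{i(α+π/2)}, i.e., Q lies on a fixed line through the origin determined by α. -/
/-!
Write `γ = s² e^{iα}` with `s = √|γ|`. Since `r ≠ 0`, the equation gives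
`Q = r - γ / r = s (e^{iθ} - e^{i(α-θ)}) = 2 s i e^{iα/2} sin(θ - α/2)`, while
`i + e^{i(α+π/2)} = i (1 + e^{iα}) = 2 i e^{iα/2} cos(α/2)`. The ratio is
`s sin(θ - α/2) / cos(α/2) = s (sin θ - tan(α/2) cos θ)`; the division is legitimate
because `γ` off the negative real axis means `|α| < π`, i.e. `cos(α/2) > 0`.
-/

open Complex

lemma I_add_exp_add_pi_div_two_mul_I (α : ℝ) :
    I + exp (((α + Real.pi / 2 : ℝ) : ℂ) * I) =
      2 * (Real.cos (α / 2) : ℂ) * I * exp ((α / 2 : ℂ) * I) := by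
  have hhalf : exp ((α / 2 : ℂ) * I) * exp ((α / 2 : ℂ) * I) = exp ((α : ℂ) * I) := by
    rw [← exp_add]; ring_nf
  have hinv : exp (-(α / 2 : ℂ) * I) * exp ((α / 2 : ℂ) * I) = 1 := by
    rw [← exp_add]; ring_nf; exact exp_zero
  rw [ofReal_cos, cos]
  push_cast
  rw [add_mul, exp_add, exp_pi_div_two_mul_I]
  linear_combination (-I) * hhalf - I * hinv

lemma I_add_exp_add_pi_div_two_mul_I_ne_zero {α : ℝ} (hα : Real.cos (α / 2) ≠ 0) :
    I + exp (((α + Real.pi / 2 : ℝ) : ℂ) * I) ≠ 0 := by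
  rw [I_add_exp_add_pi_div_two_mul_I]
  have hα' : (Real.cos (α / 2) : ℂ) ≠ 0 := by exact_mod_cast hα
  exact mul_ne_zero (mul_ne_zero (mul_ne_zero two_ne_zero hα') I_ne_zero) (exp_ne_zero _)

lemma exp_mul_I_sub_exp_sub_mul_I (α θ : ℝ) :
    exp ((θ : ℂ) * I) - exp (((α - θ : ℝ) : ℂ) * I) =
      2 * (Real.sin (θ - α / 2) : ℂ) * I * exp ((α / 2 : ℂ) * I) := by
  rw [ofReal_sin, sin]
  push_cast
  have h1 : exp (-((θ : ℂ) - α / 2) * I) * exp ((α / 2 : ℂ) * I) = exp (((α : ℂ) - θ) * I) := by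
    rw [← exp_add]; ring_nf
  have h2 : exp (((θ : ℂ) - α / 2) * I) * exp ((α / 2 : ℂ) * I) = exp ((θ : ℂ) * I) := by
    rw [← exp_add]; ring_nf
  linear_combination
    -(I ^ 2) * h1 + I ^ 2 * h2 + (exp ((θ : ℂ) * I) - exp (((α : ℂ) - θ) * I)) * I_sq

lemma Real.sin_sub_tan_mul_cos_mul_cos {x : ℝ} (hx : Real.cos x ≠ 0) (θ : ℝ) :
    (Real.sin θ - Real.tan x * Real.cos θ) * Real.cos x = Real.sin (θ - x) := by
  rw [Real.tan_eq_sin_div_cos, Real.sin_sub]; field_simp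

lemma cos_arg_div_two_pos {z : ℂ} (hz : ¬(z.re < 0 ∧ z.im = 0)) : 0 < Real.cos (z.arg / 2) := by
  have hlt : z.arg < Real.pi := (z.arg_le_pi).lt_of_ne (mt arg_eq_pi_iff.mp hz)
  exact Real.cos_pos_of_mem_Ioo ⟨by linarith [z.neg_pi_lt_arg], by linarith⟩

lemma exp_mul_I_sub_exp_sub_mul_I_eq_mul_tan {α : ℝ} (hα : Real.cos (α / 2) ≠ 0) (θ : ℝ) :
    exp ((θ : ℂ) * I) - exp (((α - θ : ℝ) : ℂ) * I) =
      (I + exp (((α + Real.pi / 2 : ℝ) : ℂ) * I)) *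
        ((Real.sin θ - Real.tan (α / 2) * Real.cos θ : ℝ) : ℂ) := by
  rw [I_add_exp_add_pi_div_two_mul_I, exp_mul_I_sub_exp_sub_mul_I,
    ← Real.sin_sub_tan_mul_cos_mul_cos hα θ, ofReal_mul]
  ring

lemma sq_sqrt_norm_mul_exp_arg_mul_I (z : ℂ) :
    (Real.sqrt ‖z‖ : ℂ) ^ 2 * exp ((z.arg : ℂ) * I) = z := by
  rw [← ofReal_pow, Real.sq_sqrt (norm_nonneg z), norm_mul_exp_arg_mul_I]

lemma eq_mul_exp_sub_exp_of_sq_sub_mul_sub_eq_zero {s Q : ℂ} (hs : s ≠ 0) (α θ : ℝ)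
    (h : (s * exp ((θ : ℂ) * I)) ^ 2 - Q * (s * exp ((θ : ℂ) * I)) -
      s ^ 2 * exp ((α : ℂ) * I) = 0) :
    Q = s * (exp ((θ : ℂ) * I) - exp (((α - θ : ℝ) : ℂ) * I)) := by
  have hsplit : exp (((α - θ : ℝ) : ℂ) * I) * exp ((θ : ℂ) * I) = exp ((α : ℂ) * I) := by
    rw [← exp_add]; push_cast; ring_nf
  apply mul_right_cancel₀ (mul_ne_zero hs (exp_ne_zero ((θ : ℂ) * I)))
  linear_combination -h + s ^ 2 * hsplit

theorem support_gamma_general (γ : ℂ) (hγ : γ ≠ 0)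
    (hγ' : ¬(γ.re < 0 ∧ γ.im = 0)) (θ : ℝ) (Q : ℂ) (r : ℂ)
    (hr : r = (Real.sqrt ‖γ‖ : ℂ) * Complex.exp ((θ : ℂ) * Complex.I))
    (h : r ^ 2 - Q * r - γ = 0) :
    Q = (Real.sqrt ‖γ‖ : ℂ) *
        (Complex.I + Complex.exp (((γ.arg + Real.pi / 2 : ℝ) : ℂ) * Complex.I)) *
        ((Real.sin θ - Real.tan (γ.arg / 2) * Real.cos θ : ℝ) : ℂ) ∧
      Complex.I + Complex.exp (((γ.arg + Real.pi / 2 : ℝ) : ℂ) * Complex.I) ≠ 0 ∧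
      ∃ t : ℝ, Q = (t : ℂ) *
        (Complex.I + Complex.exp (((γ.arg + Real.pi / 2 : ℝ) : ℂ) * Complex.I)) := by
  have hs : (Real.sqrt ‖γ‖ : ℂ) ≠ 0 := by
    exact_mod_cast (Real.sqrt_pos.2 (norm_pos_iff.2 hγ)).ne'
  have hcos : Real.cos (γ.arg / 2) ≠ 0 := (cos_arg_div_two_pos hγ').ne'
  have hQ := eq_mul_exp_sub_exp_of_sq_sub_mul_sub_eq_zero hs γ.arg θ
    (by rw [← hr, sq_sqrt_norm_mul_exp_arg_mul_I]; exact h)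
  rw [exp_mul_I_sub_exp_sub_mul_I_eq_mul_tan hcos, ← mul_assoc] at hQ
  refine ⟨hQ, I_add_exp_add_pi_div_two_mul_I_ne_zero hcos,
    Real.sqrt ‖γ‖ * (Real.sin θ - Real.tan (γ.arg / 2) * Real.cos θ), ?_⟩
  rw [hQ, ofReal_mul]
  ring
end

section
/- Interlacing step for three-term recurrences with negative coefficient (core of Theorem 3): let γ be a real number with γ < 0, let Q, p, q, P be real polynomials with positive leading coefficients satisfying P = Q·p + γ·q, and let n ≥ 1. Assume: q has exactly n−1 real zeros and p has exactly n real zeros, all of these zeros are simple, the real zeros of q strictly interlace those of p (between any two consecutive real zeros of p there lies exactly one real zero of q), and P has exactly n+1 real zeros, all simple. Then the real zeros of p strictly interlace those of P: if t_1 < t_2 < ⋯ < t_{n+1} are the real zeros of P and x_1 < ⋯ < x_n are the real zeros of p, then t_1 < x_1 < t_2 < x_2 < ⋯ < x_n < t_{n+1}. -/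
/-!
At a zero `x` of `p` the recurrence gives `P(x) = γ q(x)`. The simple zeros of `q` interlace
those of `p`, so `q` alternates in sign along `x₀ < ⋯ < xₘ`, is positive at `xₘ`, and has sign
`(-1)ᵐ` at `x₀` (it has `m` zeros above `x₀`). As `γ < 0`, `P` changes sign between consecutive
`xᵢ`, is negative at `xₘ` while `P → +∞`, and at `x₀` has the sign opposite to `(-1)ᵐ⁺²`, which is
its sign far to the left because it has `m + 2` real zeros. This produces a zero of `P` in each of
the `m + 2` gaps of the `xᵢ`, and these must be all its zeros.
-/

open Polynomial

theorem Multiset.neg_one_pow_card_filter_lt_mul_prod_map_sub {R : Type*} [CommRing R]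
    [LinearOrder R] [IsStrictOrderedRing R] (m : Multiset R) (s : R) :
    (-1) ^ card (m.filter (s < ·)) * (m.map (s - ·)).prod = (m.map (|s - ·|)).prod := by
  induction m using Multiset.induction_on with
  | empty => simp
  | cons a m ih =>
    by_cases hsa : s < a
    · rw [Multiset.filter_cons_of_pos _ hsa, card_cons, map_cons, prod_cons, map_cons, prod_cons,
        ← ih, abs_of_neg (sub_neg.2 hsa)]
      ring
    · rw [Multiset.filter_cons_of_neg _ hsa, map_cons, prod_cons, map_cons, prod_cons,
        ← ih, abs_of_nonneg (sub_nonneg.2 (not_lt.1 hsa))]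
      ring

namespace Polynomial

variable {f : ℝ[X]} {a b s : ℝ}

theorem eval_mul_eval_pos_of_forall_not_isRoot (hab : a ≤ b)
    (h : ∀ s ∈ Set.Icc a b, ¬ f.IsRoot s) : 0 < f.eval a * f.eval b := by
  by_contra! hle
  have hzero : (0 : ℝ) ∈ Set.uIcc (f.eval a) (f.eval b) := by
    rcases mul_nonpos_iff.1 hle with ⟨ha, hb⟩ | ⟨ha, hb⟩
    · exact Set.mem_uIcc_of_ge hb ha
    · exact Set.mem_uIcc_of_le ha hb
  obtain ⟨s, hs, hfs⟩ := intermediate_value_uIcc f.continuous.continuousOn hzero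
  rw [Set.uIcc_of_le hab] at hs
  exact h s hs hfs

theorem exists_isRoot_mem_Ioo_of_eval_mul_eval_neg (hab : a ≤ b)
    (h : f.eval a * f.eval b < 0) : ∃ s ∈ Set.Ioo a b, f.IsRoot s := by
  by_contra! hno
  refine (eval_mul_eval_pos_of_forall_not_isRoot hab fun s hs hroot => ?_).not_gt h
  rcases hs.1.eq_or_lt with rfl | hsa
  · simp [hroot.eq_zero] at h
  rcases hs.2.eq_or_lt with rfl | hsb
  · simp [hroot.eq_zero] at h
  exact hno s ⟨hsa, hsb⟩ hroot

theorem eval_mul_eval_neg_of_rootMultiplicity_eq_one {r : ℝ} (har : a < r) (hrb : r < b)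
    (hr : f.rootMultiplicity r = 1) (h : ∀ s ∈ Set.Icc a b, f.IsRoot s → s = r) :
    f.eval a * f.eval b < 0 := by
  have hf : f ≠ 0 := by rintro rfl; simp at hr
  obtain ⟨g, hfg, hgr⟩ := f.exists_eq_pow_rootMultiplicity_mul_and_not_dvd hf r
  rw [hr, pow_one] at hfg
  have hg : ∀ s ∈ Set.Icc a b, ¬ g.IsRoot s := by
    intro s hs hgs
    have hsr : s = r := h s hs (by simp [hfg, hgs.eq_zero])
    exact hgr (dvd_iff_isRoot.2 (hsr ▸ hgs))
  have hgab := eval_mul_eval_pos_of_forall_not_isRoot (har.trans hrb).le hg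
  have hfab : f.eval a * f.eval b = (a - r) * (b - r) * (g.eval a * g.eval b) := by
    simp only [hfg, eval_mul, eval_sub, eval_X, eval_C]; ring
  rw [hfab]
  exact mul_neg_of_neg_of_pos (mul_neg_of_neg_of_pos (by linarith) (by linarith)) hgab

theorem eventually_atTop_eval_pos (hf : 0 < f.leadingCoeff) :
    ∀ᶠ x in Filter.atTop, 0 < f.eval x := by
  by_cases hdeg : 0 < f.degree
  · exact (f.tendsto_atTop_of_leadingCoeff_nonneg hdeg hf.le).eventually_gt_atTop 0
  · rw [eq_C_of_degree_le_zero (not_lt.1 hdeg)] at hf ⊢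
    exact Filter.Eventually.of_forall fun _ => by simpa using hf

theorem eval_pos_of_forall_not_isRoot (hf : 0 < f.leadingCoeff) (h : ∀ s, ¬ f.IsRoot s) :
    0 < f.eval s := by
  obtain ⟨b, hfb, hsb⟩ := ((eventually_atTop_eval_pos hf).and
    (Filter.eventually_ge_atTop s)).exists
  exact pos_of_mul_pos_left (eval_mul_eval_pos_of_forall_not_isRoot hsb fun t _ => h t) hfb.le

theorem neg_one_pow_card_filter_roots_mul_eval_pos (hf : 0 < f.leadingCoeff)
    (hs : ¬ f.IsRoot s) : 0 < (-1) ^ Multiset.card (f.roots.filter (s < ·)) * f.eval s := by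
  obtain ⟨g, hfg, -, hg⟩ := f.exists_prod_multiset_X_sub_C_mul
  have hgf : g.leadingCoeff = f.leadingCoeff := by
    rw [← hfg, leadingCoeff_mul, (monic_multisetProd_X_sub_C _).leadingCoeff, one_mul]
  have hg0 : g ≠ 0 := by rintro rfl; simp at hgf; linarith
  have hgs : 0 < g.eval s := eval_pos_of_forall_not_isRoot (hgf ▸ hf) fun t ht => by
    simpa [hg] using (mem_roots hg0).2 ht
  have hfs : f.eval s = (f.roots.map (s - ·)).prod * g.eval s := by
    conv_lhs => rw [← hfg]
    simp [eval_multiset_prod, Multiset.map_map]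
  have hroots : 0 < (f.roots.map (|s - ·|)).prod := Multiset.prod_pos fun t ht => by
    obtain ⟨r, hr, rfl⟩ := Multiset.mem_map.1 ht
    exact abs_pos.2 (sub_ne_zero.2 fun hsr => hs (hsr ▸ isRoot_of_mem_roots hr))
  rw [hfs, ← mul_assoc, Multiset.neg_one_pow_card_filter_lt_mul_prod_map_sub]
  exact mul_pos hroots hgs

theorem eval_pos_of_forall_isRoot_lt (hf : 0 < f.leadingCoeff) (h : ∀ r, f.IsRoot r → r < s) :
    0 < f.eval s := by
  have := neg_one_pow_card_filter_roots_mul_eval_pos hf fun hs => (h s hs).false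
  rwa [Multiset.filter_eq_nil.2 fun r hr => (h r (isRoot_of_mem_roots hr)).not_gt,
    Multiset.card_zero, pow_zero, one_mul] at this

theorem neg_one_pow_card_roots_mul_eval_pos_of_forall_isRoot_gt (hf : 0 < f.leadingCoeff)
    (h : ∀ r, f.IsRoot r → s < r) : 0 < (-1) ^ Multiset.card f.roots * f.eval s := by
  have := neg_one_pow_card_filter_roots_mul_eval_pos hf fun hs => (h s hs).false
  rwa [Multiset.filter_eq_self.2 fun r hr => h r (isRoot_of_mem_roots hr)] at this

theorem card_roots_eq_of_rootMultiplicity_eq_one {R ι : Type*} [CommRing R] [IsDomain R]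
    [Fintype ι] {f : R[X]} {e : ι → R} (he : Function.Injective e)
    (hroot : ∀ s, f.IsRoot s ↔ ∃ i, s = e i) (hsimple : ∀ i, f.rootMultiplicity (e i) = 1) :
    Multiset.card f.roots = Fintype.card ι := by
  classical
  have hroots : f.roots = Finset.univ.val.map e := by
    ext a
    rw [count_roots]
    by_cases ha : f.IsRoot a
    · obtain ⟨i, rfl⟩ := (hroot a).1 ha
      rw [hsimple, Multiset.count_map_eq_count' e _ he, Multiset.count_univ]
    · rw [rootMultiplicity_eq_zero ha, eq_comm, Multiset.count_eq_zero]
      rw [hroot a] at ha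
      simp only [Multiset.mem_map, Finset.mem_val, Finset.mem_univ, true_and]
      exact fun ⟨i, hi⟩ => ha ⟨i, hi.symm⟩
  rw [hroots, Multiset.card_map, Finset.card_val, Finset.card_univ]

theorem exists_isRoot_gt_of_eval_neg (hf : 0 < f.leadingCoeff) (ha : f.eval a < 0) :
    ∃ s > a, f.IsRoot s := by
  by_contra! h
  refine (eval_pos_of_forall_isRoot_lt hf fun r hr => ?_).not_gt ha
  refine lt_of_le_of_ne (not_lt.1 fun har => h r har hr) fun hra => ?_
  simp [hra ▸ hr.eq_zero] at ha

theorem exists_isRoot_lt_of_neg_one_pow_card_roots_mul_eval_neg (hf : 0 < f.leadingCoeff)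
    (ha : (-1) ^ Multiset.card f.roots * f.eval a < 0) : ∃ s < a, f.IsRoot s := by
  by_contra! h
  refine (neg_one_pow_card_roots_mul_eval_pos_of_forall_isRoot_gt hf fun r hr => ?_).not_gt ha
  refine lt_of_le_of_ne (not_lt.1 fun hra => h r hra hr) fun har => ?_
  simp [har ▸ hr.eq_zero] at ha

section Interlacing

variable {m : ℕ} {yr : Fin m → ℝ} {xr : Fin (m + 1) → ℝ}

theorem eval_last_pos_of_interlace (hf : 0 < f.leadingCoeff) (hx : Monotone xr)
    (hroot : ∀ s, f.IsRoot s → ∃ i, s = yr i)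
    (hinter : ∀ i : Fin m, xr i.castSucc < yr i ∧ yr i < xr i.succ) :
    0 < f.eval (xr (Fin.last m)) :=
  eval_pos_of_forall_isRoot_lt hf fun r hr => by
    obtain ⟨j, rfl⟩ := hroot r hr
    exact (hinter j).2.trans_le (hx (Fin.le_last _))

theorem neg_one_pow_mul_eval_zero_pos_of_interlace (hf : 0 < f.leadingCoeff)
    (hx : Monotone xr) (hy : Function.Injective yr) (hroot : ∀ s, f.IsRoot s ↔ ∃ i, s = yr i)
    (hsimple : ∀ i, f.rootMultiplicity (yr i) = 1)
    (hinter : ∀ i : Fin m, xr i.castSucc < yr i ∧ yr i < xr i.succ) :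
    0 < (-1) ^ m * f.eval (xr 0) := by
  simpa [card_roots_eq_of_rootMultiplicity_eq_one hy hroot hsimple] using
    neg_one_pow_card_roots_mul_eval_pos_of_forall_isRoot_gt hf fun r hr => by
      obtain ⟨j, rfl⟩ := (hroot r).1 hr
      exact (hx (Fin.zero_le _)).trans_lt (hinter j).1

theorem eval_castSucc_mul_eval_succ_neg_of_interlace (hx : StrictMono xr)
    (hroot : ∀ s, f.IsRoot s → ∃ i, s = yr i) (hsimple : ∀ i, f.rootMultiplicity (yr i) = 1)
    (hinter : ∀ i : Fin m, xr i.castSucc < yr i ∧ yr i < xr i.succ) (k : Fin m) :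
    f.eval (xr k.castSucc) * f.eval (xr k.succ) < 0 := by
  refine eval_mul_eval_neg_of_rootMultiplicity_eq_one (hinter k).1 (hinter k).2 (hsimple k)
    fun s hs hr => ?_
  obtain ⟨j, rfl⟩ := hroot s hr
  have hkj : k.castSucc < j.succ := hx.lt_iff_lt.1 (hs.1.trans_lt (hinter j).2)
  have hjk : j.castSucc < k.succ := hx.lt_iff_lt.1 ((hinter j).1.trans_le hs.2)
  rw [Fin.castSucc_lt_succ_iff] at hkj hjk
  rw [le_antisymm hjk hkj]

end Interlacing

end Polynomial

theorem StrictMono.interlace_of_exists_mem_gaps {α : Type*} [LinearOrder α] {m : ℕ}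
    {x : Fin (m + 1) → α} {t : Fin (m + 2) → α} (ht : StrictMono t) (hbot : ∃ k, t k < x 0)
    (hgap : ∀ i : Fin m, ∃ k, x i.castSucc < t k ∧ t k < x i.succ)
    (htop : ∃ k, x (Fin.last m) < t k) : ∀ i, t i.castSucc < x i ∧ x i < t i.succ := by
  obtain ⟨kb, hkb⟩ := hbot
  choose kg hkg using hgap
  obtain ⟨kt, hkt⟩ := htop
  -- `σ j` indexes a point of `t` in the `j`-th gap; being strictly monotone, `σ` is the identity.
  let σ : Fin (m + 2) → Fin (m + 2) := Fin.cons kb (Fin.snoc kg kt)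
  have hbelow : ∀ i : Fin (m + 1), t (σ i.castSucc) < x i := by
    intro i
    cases i using Fin.cases with
    | zero => simpa [σ] using hkb
    | succ i => simpa [σ, ← Fin.succ_castSucc] using (hkg i).2
  have habove : ∀ i : Fin (m + 1), x i < t (σ i.succ) := by
    intro i
    cases i using Fin.lastCases with
    | last => simpa [σ] using hkt
    | cast i => simpa [σ] using (hkg i).1
  have hσ : σ = id := StrictMono.eq_id <| Fin.strictMono_iff_lt_succ.2 fun i =>
    ht.lt_iff_lt.1 ((hbelow i).trans (habove i))
  intro i
  simpa [hσ] using And.intro (hbelow i) (habove i)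

theorem interlacing_step_general (γ : ℝ) (hγ : γ < 0) (Q p q P : Polynomial ℝ)
    (hqlead : 0 < q.leadingCoeff) (hPlead : 0 < P.leadingCoeff)
    (hrec : P = Q * p + Polynomial.C γ * q)
    (m : ℕ)
    (yr : Fin m → ℝ) (xr : Fin (m + 1) → ℝ) (tr : Fin (m + 2) → ℝ)
    (hy : StrictMono yr) (hx : StrictMono xr) (ht : StrictMono tr)
    (hyroot : ∀ s : ℝ, q.IsRoot s ↔ ∃ i, s = yr i)
    (hxroot : ∀ s : ℝ, p.IsRoot s ↔ ∃ i, s = xr i)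
    (htroot : ∀ s : ℝ, P.IsRoot s ↔ ∃ i, s = tr i)
    (hysimple : ∀ i, q.rootMultiplicity (yr i) = 1)
    (htsimple : ∀ i, P.rootMultiplicity (tr i) = 1)
    (hinter : ∀ i : Fin m, xr i.castSucc < yr i ∧ yr i < xr i.succ) :
    ∀ i : Fin (m + 1), tr i.castSucc < xr i ∧ xr i < tr i.succ := by
  have hPx (i : Fin (m + 1)) : P.eval (xr i) = γ * q.eval (xr i) := by
    simp [hrec, ((hxroot _).2 ⟨i, rfl⟩).eq_zero]
  have hP_root {s : ℝ} (hs : P.IsRoot s) : ∃ k, s = tr k := (htroot s).1 hs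
  refine ht.interlace_of_exists_mem_gaps ?_ (fun k => ?_) ?_
  · have hq := neg_one_pow_mul_eval_zero_pos_of_interlace hqlead hx.monotone hy.injective
      hyroot hysimple hinter
    obtain ⟨s, hs, hroot⟩ := exists_isRoot_lt_of_neg_one_pow_card_roots_mul_eval_neg hPlead (by
      rw [card_roots_eq_of_rootMultiplicity_eq_one ht.injective htroot htsimple, Fintype.card_fin,
        hPx, pow_add, neg_one_sq, mul_one, mul_left_comm]
      exact mul_neg_of_neg_of_pos hγ hq)
    obtain ⟨j, rfl⟩ := hP_root hroot
    exact ⟨j, hs⟩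
  · have hq := eval_castSucc_mul_eval_succ_neg_of_interlace hx (hyroot · |>.1) hysimple hinter k
    obtain ⟨s, hs, hroot⟩ := exists_isRoot_mem_Ioo_of_eval_mul_eval_neg
      (hx.monotone (Fin.castSucc_le_succ k)) (by
        rw [hPx, hPx, mul_mul_mul_comm]
        exact mul_neg_of_pos_of_neg (mul_pos_of_neg_of_neg hγ hγ) hq)
    obtain ⟨j, rfl⟩ := hP_root hroot
    exact ⟨j, hs⟩
  · have hq := eval_last_pos_of_interlace hqlead hx.monotone (hyroot · |>.1) hinter
    obtain ⟨s, hs, hroot⟩ := exists_isRoot_gt_of_eval_neg hPlead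
      (by rw [hPx]; exact mul_neg_of_neg_of_pos hγ hq)
    obtain ⟨j, rfl⟩ := hP_root hroot
    exact ⟨j, hs⟩

theorem interlacing_step (γ : ℝ) (hγ : γ < 0) (Q p q P : Polynomial ℝ)
    (hQlead : 0 < Q.leadingCoeff) (hplead : 0 < p.leadingCoeff)
    (hqlead : 0 < q.leadingCoeff) (hPlead : 0 < P.leadingCoeff)
    (hrec : P = Q * p + Polynomial.C γ * q)
    (m : ℕ)
    (yr : Fin m → ℝ) (xr : Fin (m + 1) → ℝ) (tr : Fin (m + 2) → ℝ)
    (hy : StrictMono yr) (hx : StrictMono xr) (ht : StrictMono tr)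
    (hyroot : ∀ s : ℝ, q.IsRoot s ↔ ∃ i, s = yr i)
    (hxroot : ∀ s : ℝ, p.IsRoot s ↔ ∃ i, s = xr i)
    (htroot : ∀ s : ℝ, P.IsRoot s ↔ ∃ i, s = tr i)
    (hysimple : ∀ i, q.rootMultiplicity (yr i) = 1)
    (hxsimple : ∀ i, p.rootMultiplicity (xr i) = 1)
    (htsimple : ∀ i, P.rootMultiplicity (tr i) = 1)
    (hinter : ∀ i : Fin m, xr i.castSucc < yr i ∧ yr i < xr i.succ) :
    ∀ i : Fin (m + 1), tr i.castSucc < xr i ∧ xr i < tr i.succ :=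
  interlacing_step_general γ hγ Q p q P hqlead hPlead hrec m yr xr tr hy hx ht hyroot hxroot htroot
    hysimple htsimple hinter
end

section
/- Theorem 5 (explicit three-term recurrence for T_k): let k ≥ 3 be odd, and for n ≥ 1 let p_n(z) = det(z·I_{nk} + T_k^{(nk)}), with p_0(z) := 1. Set α = ⌊(k−3)/4⌋ and S(z) = Σ_{u=0}^{α} [ C((k+1)/2 − u − 1, u)·z^{k−4u} − C((k+1)/2 − u − 2, u)·z^{k−4u−2} ], where C(m, r) denotes the binomial coefficient. Define Q^k(z) = S(z) if k ≡ 3 (mod 4), and Q^k(z) = S(z) + z if k ≡ 1 (mod 4). Then for every n ≥ 2 and every z ∈ ℂ: p_n(z) = Q^k(z)·p_{n−1}(z) + (−1)^{(k mod 4) mod 3}·p_{n−2}(z). -/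
/-!
Theorem 5 (explicit three-term recurrence for `T_k`): for odd `k ≥ 3`, with
`p_n(z) = det (z • I_{nk} + T_k^{(nk)})` (and `p_0 = 1`),
`α = ⌊(k−3)/4⌋`,
`S(z) = Σ_{u=0}^{α} [ C((k+1)/2 − u − 1, u)·z^{k−4u} − C((k+1)/2 − u − 2, u)·z^{k−4u−2} ]`,
`Q^k(z) = S(z)` if `k ≡ 3 (mod 4)` and `Q^k(z) = S(z) + z` if `k ≡ 1 (mod 4)`,
one has for every `n ≥ 2` and every `z ∈ ℂ`:
`p_n(z) = Q^k(z)·p_{n−1}(z) + (−1)^{(k mod 4) mod 3}·p_{n−2}(z)`.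
-/

open Matrix

/-- The special tridiagonal `k`-Toeplitz matrix `T_k` of dimension `N`,
regarded as a complex matrix: zero main diagonal, subdiagonal entries `1`,
superdiagonal entries `(−1)^{i mod k}` in (0-indexed) row `i`. -/
noncomputable def Tk (k N : ℕ) : Matrix (Fin N) (Fin N) ℂ :=
  Matrix.of fun i j =>
    if (j : ℕ) = (i : ℕ) + 1 then (-1 : ℂ) ^ ((i : ℕ) % k)
    else if (i : ℕ) = (j : ℕ) + 1 then 1
    else 0

/-- `p_n(z) = det (z • I_{nk} + T_k^{(nk)})`; in particular `p_0 = 1`. -/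
noncomputable def pT (k n : ℕ) (z : ℂ) : ℂ :=
  (z • (1 : Matrix (Fin (n * k)) (Fin (n * k)) ℂ) + Tk k (n * k)).det

/-- The sum `S(z)` appearing in Theorem 5 (with `α = ⌊(k−3)/4⌋`). -/
noncomputable def Ssum (k : ℕ) (z : ℂ) : ℂ :=
  ∑ u ∈ Finset.range ((k - 3) / 4 + 1),
    ((Nat.choose ((k + 1) / 2 - u - 1) u : ℂ) * z ^ (k - 4 * u) -
      (Nat.choose ((k + 1) / 2 - u - 2) u : ℂ) * z ^ (k - 4 * u - 2))

/-- The coefficient polynomial `Q^k(z)` of Theorem 5. -/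
noncomputable def QT (k : ℕ) (z : ℂ) : ℂ :=
  if k % 4 = 3 then Ssum k z else Ssum k z + z

/-!
Expanding `det (z • 1 + T_k^{(N)})` along its last row gives the continuant recurrence
`d (N + 2) = z * d (N + 1) - ε N * d N` with `ε N = (-1) ^ (N % k)`, so
`(d (N + 1), d N) = P N (z, 1)` for the product `P N = M (N - 1) ⋯ M 0` of the transfer matrices
`M i = !![z, -ε i; 1, 0]`. As `ε` is `k`-periodic, `P ((n + 1) * k) = P k * P (n * k)`, and
Cayley–Hamilton for the `2 × 2` matrix `P k` turns this into
`p (n + 2) = tr (P k) * p (n + 1) - det (P k) * p n` for `p n = d (n * k)`.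
For `k = 2 m + 1` the signs below `k` alternate, so `P k = M 0 * C ^ m` with `C = M 1 * M 0`
and `C * C = z² • C + 1`: thus `det (P k) = (-1) ^ m`, and the traces obey the Fibonacci
recurrence in `z²`, whose solution is the binomial sum defining `Q^k`.
-/

open Finset

section Continuant

variable {R : Type*} [CommRing R] (z : R) (ε : ℕ → R)

def continuant : ℕ → R
  | 0 => 1
  | 1 => z
  | N + 2 => z * continuant (N + 1) - ε N * continuant N

def transferMatrix (N : ℕ) : Matrix (Fin 2) (Fin 2) R := !![z, -ε N; 1, 0]

def transferProd : ℕ → Matrix (Fin 2) (Fin 2) R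
  | 0 => 1
  | N + 1 => transferMatrix z ε N * transferProd N

theorem transferProd_mulVec (N : ℕ) :
    transferProd z ε N *ᵥ ![z, 1] = ![continuant z ε (N + 1), continuant z ε N] := by
  induction N with
  | zero => simp [transferProd, continuant]
  | succ N ih =>
    rw [transferProd, ← mulVec_mulVec, ih, continuant, transferMatrix]
    ext i; fin_cases i <;> simp [sub_eq_add_neg, mul_comm]

theorem transferProd_congr {ε' : ℕ → R} {N : ℕ} (h : ∀ i < N, ε i = ε' i) :
    transferProd z ε N = transferProd z ε' N := by
  induction N with
  | zero => rfl
  | succ N ih =>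
    rw [transferProd, transferProd, transferMatrix, transferMatrix, h N N.lt_succ_self,
      ih fun i hi => h i (by omega)]

theorem transferProd_mul_add_of_periodic {k : ℕ} (hε : Function.Periodic ε k) (n j : ℕ) :
    transferProd z ε (n * k + j) = transferProd z ε j * transferProd z ε (n * k) := by
  induction j with
  | zero => simp [transferProd]
  | succ j ih =>
    have hj : ε (n * k + j) = ε j := by simpa [add_comm] using hε.nat_mul n j
    rw [← add_assoc, transferProd, transferProd, ih, transferMatrix, transferMatrix, hj, mul_assoc]

theorem mul_self_eq_trace_smul_sub_det_smul (A : Matrix (Fin 2) (Fin 2) R) :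
    A * A = A.trace • A - A.det • 1 := by
  rw [eta_fin_two A, mul_fin_two, trace_fin_two_of, det_fin_two_of]
  ext i j; fin_cases i <;> fin_cases j <;> simp <;> ring

theorem continuant_periodic_recurrence {k : ℕ} (hε : Function.Periodic ε k) (n : ℕ) :
    continuant z ε ((n + 2) * k) = (transferProd z ε k).trace * continuant z ε ((n + 1) * k)
      - (transferProd z ε k).det * continuant z ε (n * k) := by
  have hstep (m : ℕ) :
      transferProd z ε ((m + 1) * k) = transferProd z ε k * transferProd z ε (m * k) := by
    rw [add_one_mul, transferProd_mul_add_of_periodic z ε hε]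
  have hP : transferProd z ε ((n + 2) * k)
      = (transferProd z ε k).trace • transferProd z ε ((n + 1) * k)
        - (transferProd z ε k).det • transferProd z ε (n * k) := by
    rw [hstep, hstep, ← mul_assoc, mul_self_eq_trace_smul_sub_det_smul, sub_mul, smul_mul_assoc,
      smul_mul_assoc, one_mul]
  have hv := congrArg (· *ᵥ ![z, 1]) hP
  simp only [sub_mulVec, smul_mulVec, transferProd_mulVec] at hv
  simpa using congrFun hv 1

end Continuant

theorem det_succ_succ_of_last_row_col {R : Type*} [CommRing R] {N : ℕ}
    (A : Matrix (Fin (N + 2)) (Fin (N + 2)) R)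
    (hrow : ∀ j : Fin N, A (Fin.last _) j.castSucc.castSucc = 0)
    (hcol : ∀ i : Fin N, A i.castSucc.castSucc (Fin.last _) = 0) :
    A.det = A (Fin.last _) (Fin.last _) * (A.submatrix Fin.castSucc Fin.castSucc).det
      - A (Fin.last _) (Fin.last N).castSucc * A (Fin.last N).castSucc (Fin.last _) *
        ((A.submatrix Fin.castSucc Fin.castSucc).submatrix Fin.castSucc Fin.castSucc).det := by
  have hsucc : (Fin.last N).castSucc.succAbove ∘ Fin.castSucc = Fin.castSucc ∘ Fin.castSucc := by
    funext i
    exact Fin.succAbove_castSucc_of_lt _ _ (Fin.castSucc_lt_last i)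
  rw [det_succ_row A (Fin.last _), Fin.sum_univ_castSucc, Fin.sum_univ_castSucc]
  simp only [hrow, mul_zero, zero_mul, sum_const_zero, zero_add, Fin.succAbove_last]
  rw [det_succ_column _ (Fin.last _), Fin.sum_univ_castSucc]
  simp only [submatrix_apply, Fin.succAbove_castSucc_self, Fin.succ_last, hcol, mul_zero, zero_mul,
    sum_const_zero, zero_add, submatrix_submatrix, Fin.succAbove_last, hsucc, Fin.val_last,
    Fin.val_castSucc, (Even.add_self _).neg_one_pow, odd_add_one_self.neg_one_pow]
  ring

theorem smul_one_add_Tk_submatrix_castSucc (k N : ℕ) (z : ℂ) :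
    (z • (1 : Matrix (Fin (N + 1)) (Fin (N + 1)) ℂ) + Tk k (N + 1)).submatrix
      Fin.castSucc Fin.castSucc = z • 1 + Tk k N := by
  ext i j
  simp [Tk, one_apply]

theorem det_smul_one_add_Tk_add_two (k N : ℕ) (z : ℂ) :
    (z • (1 : Matrix (Fin (N + 2)) (Fin (N + 2)) ℂ) + Tk k (N + 2)).det
      = z * (z • (1 : Matrix (Fin (N + 1)) (Fin (N + 1)) ℂ) + Tk k (N + 1)).det
        - (-1) ^ (N % k) * (z • (1 : Matrix (Fin N) (Fin N) ℂ) + Tk k N).det := by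
  have hrow (j : Fin N) : (z • 1 + Tk k (N + 2)) (Fin.last _) j.castSucc.castSucc = 0 := by
    have := j.isLt
    simp only [Tk, Matrix.add_apply, Matrix.smul_apply, one_apply, of_apply, Fin.ext_iff,
      Fin.val_last, Fin.val_castSucc, smul_eq_mul]
    split_ifs <;> first | omega | simp
  have hcol (i : Fin N) : (z • 1 + Tk k (N + 2)) i.castSucc.castSucc (Fin.last _) = 0 := by
    have := i.isLt
    simp only [Tk, Matrix.add_apply, Matrix.smul_apply, one_apply, of_apply, Fin.ext_iff,
      Fin.val_last, Fin.val_castSucc, smul_eq_mul]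
    split_ifs <;> first | omega | simp
  have hsub : (z • 1 + Tk k (N + 2)) (Fin.last _) (Fin.last N).castSucc = 1 := by
    simp only [Tk, Matrix.add_apply, Matrix.smul_apply, one_apply, of_apply, Fin.ext_iff,
      Fin.val_last, Fin.val_castSucc, smul_eq_mul]
    split_ifs <;> first | omega | simp
  have hdiag : (z • 1 + Tk k (N + 2)) (Fin.last _) (Fin.last _) = z := by simp [Tk]
  have hsuper : (z • 1 + Tk k (N + 2)) (Fin.last N).castSucc (Fin.last _) = (-1) ^ (N % k) := by
    simp [Tk]
  rw [det_succ_succ_of_last_row_col _ hrow hcol, hdiag, hsub, hsuper, one_mul,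
    smul_one_add_Tk_submatrix_castSucc, smul_one_add_Tk_submatrix_castSucc]

theorem det_smul_one_add_Tk (k N : ℕ) (z : ℂ) :
    (z • (1 : Matrix (Fin N) (Fin N) ℂ) + Tk k N).det
      = continuant z (fun i => (-1) ^ (i % k)) N := by
  induction N using Nat.twoStepInduction with
  | zero => simp [continuant]
  | one => simp [continuant, Tk]
  | more N ih₁ ih₂ => rw [det_smul_one_add_Tk_add_two, ih₁, ih₂, continuant]

section FibPoly

variable {R : Type*} [CommSemiring R] (y : R)

def fibPoly (m : ℕ) : R := ∑ p ∈ antidiagonal m, (p.2.choose p.1 : R) * y ^ (p.2 - p.1)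

theorem fibPoly_zero : fibPoly y 0 = 1 := by simp [fibPoly]

theorem fibPoly_one : fibPoly y 1 = y := by simp [fibPoly, Nat.antidiagonal_succ]

theorem fibPoly_add_two (m : ℕ) : fibPoly y (m + 2) = y * fibPoly y (m + 1) + fibPoly y m := by
  have h₂ : fibPoly y (m + 2) = y ^ (m + 2)
      + ∑ p ∈ antidiagonal m, ((p.2 + 1).choose (p.1 + 1) : R) * y ^ (p.2 - p.1) := by
    rw [fibPoly, Nat.sum_antidiagonal_succ', Nat.sum_antidiagonal_succ]
    simp
  have h₁ : fibPoly y (m + 1) = y ^ (m + 1)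
      + ∑ p ∈ antidiagonal m, (p.2.choose (p.1 + 1) : R) * y ^ (p.2 - (p.1 + 1)) := by
    rw [fibPoly, Nat.sum_antidiagonal_succ]
    simp
  have hshift (p : ℕ × ℕ) : y * ((p.2.choose (p.1 + 1) : R) * y ^ (p.2 - (p.1 + 1)))
      = (p.2.choose (p.1 + 1) : R) * y ^ (p.2 - p.1) := by
    rcases lt_or_ge p.1 p.2 with h | h
    · rw [mul_left_comm, ← pow_succ', Nat.sub_add_eq, Nat.sub_add_cancel (by omega)]
    · simp [Nat.choose_eq_zero_of_lt (by omega : p.2 < p.1 + 1)]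
  rw [h₂, h₁, mul_add, mul_sum, sum_congr rfl fun p _ => hshift p, fibPoly]
  simp only [Nat.choose_succ_succ, Nat.cast_add, add_mul, sum_add_distrib]
  ring

theorem fibPoly_eq_sum_range (m : ℕ) :
    fibPoly y m = ∑ u ∈ range (m / 2 + 1), ((m - u).choose u : R) * y ^ (m - 2 * u) := by
  rw [fibPoly, Nat.sum_antidiagonal_eq_sum_range_succ_mk]
  refine (sum_subset (range_subset_range.2 (by omega)) fun u hu hu' => ?_).symm.trans
    (sum_congr rfl fun u _ => by rw [Nat.sub_sub, two_mul])
  simp only [mem_range, not_lt] at hu hu'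
  simp [Nat.choose_eq_zero_of_lt (by omega : m - u < u)]

end FibPoly

theorem trace_mul_pow_add_two {n R : Type*} [Fintype n] [DecidableEq n] [CommRing R]
    {C : Matrix n n R} {a : R} (hC : C * C = a • C + 1) (A : Matrix n n R) (j : ℕ) :
    (A * C ^ (j + 2)).trace = a * (A * C ^ (j + 1)).trace + (A * C ^ j).trace := by
  rw [pow_add, sq, hC, mul_add, mul_smul_comm, mul_one, ← pow_succ, mul_add, mul_smul_comm,
    trace_add, trace_smul, smul_eq_mul]

section AlternatingSigns

variable {R : Type*} [CommRing R] (z : R)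

theorem transferProd_neg_one_pow_two_mul (m : ℕ) :
    transferProd z (fun i => (-1) ^ i) (2 * m) = !![z ^ 2 + 1, -z; z, -1] ^ m := by
  induction m with
  | zero => rfl
  | succ m ih =>
    rw [mul_add_one, transferProd, transferProd, ih, ← mul_assoc, pow_succ' _ m]
    congr 1
    simp [transferMatrix, pow_succ, pow_mul]

theorem transferProd_neg_one_pow_two_mul_add_one (m : ℕ) :
    transferProd z (fun i => (-1) ^ i) (2 * m + 1)
      = !![z, -1; 1, 0] * !![z ^ 2 + 1, -z; z, -1] ^ m := by
  rw [transferProd, transferProd_neg_one_pow_two_mul]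
  simp [transferMatrix, pow_mul]

theorem trace_transferProd_neg_one_pow (m : ℕ) :
    (transferProd z (fun i => (-1) ^ i) (2 * m + 3)).trace
      = z * (fibPoly (z ^ 2) (m + 1) - fibPoly (z ^ 2) m) := by
  have hC : !![z ^ 2 + 1, -z; z, -1] * !![z ^ 2 + 1, -z; z, -1]
      = z ^ 2 • !![z ^ 2 + 1, -z; z, -1] + 1 := by
    rw [mul_self_eq_trace_smul_sub_det_smul, trace_fin_two_of, det_fin_two_of]
    module
  rw [show 2 * m + 3 = 2 * (m + 1) + 1 by ring, transferProd_neg_one_pow_two_mul_add_one]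
  induction m using Nat.twoStepInduction with
  | zero =>
    rw [zero_add, pow_one, fibPoly_one, fibPoly_zero, mul_fin_two, trace_fin_two_of]
    ring
  | one =>
    rw [trace_mul_pow_add_two hC, pow_one, pow_zero, mul_one, fibPoly_add_two, fibPoly_one,
      fibPoly_zero, mul_fin_two, trace_fin_two_of, trace_fin_two_of]
    ring
  | more m ih₁ ih₂ =>
    rw [trace_mul_pow_add_two hC, ih₁, ih₂, fibPoly_add_two _ (m + 1), fibPoly_add_two _ m]
    ring

theorem det_transferProd_neg_one_pow (m : ℕ) :
    (transferProd z (fun i => (-1) ^ i) (2 * m + 1)).det = (-1) ^ m := by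
  rw [transferProd_neg_one_pow_two_mul_add_one, det_mul, det_pow, det_fin_two_of, det_fin_two_of]
  ring

end AlternatingSigns

theorem QT_two_mul_add_three (m : ℕ) (z : ℂ) :
    QT (2 * m + 3) z = z * (fibPoly (z ^ 2) (m + 1) - fibPoly (z ^ 2) m) := by
  have hS : Ssum (2 * m + 3) z = z * ((∑ u ∈ range (m / 2 + 1),
      ((m + 1 - u).choose u : ℂ) * (z ^ 2) ^ (m + 1 - 2 * u)) - fibPoly (z ^ 2) m) := by
    rw [fibPoly_eq_sum_range, Ssum, mul_sub, mul_sum, mul_sum, ← sum_sub_distrib]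
    refine sum_congr (by congr 1; omega) fun u hu => ?_
    have : u ≤ m / 2 := by simpa [Nat.lt_succ_iff] using hu
    rw [show (2 * m + 3 + 1) / 2 - u - 1 = m + 1 - u by omega,
      show (2 * m + 3 + 1) / 2 - u - 2 = m - u by omega,
      show 2 * m + 3 - 4 * u - 2 = 2 * (m - 2 * u) + 1 by omega,
      show 2 * m + 3 - 4 * u = 2 * (m + 1 - 2 * u) + 1 by omega]
    ring
  rw [QT, hS, fibPoly_eq_sum_range _ (m + 1)]
  rcases Nat.even_or_odd m with ⟨a, rfl⟩ | ⟨a, rfl⟩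
  · rw [if_pos (by omega), show (a + a + 1) / 2 = (a + a) / 2 by omega]
  -- for odd `m` the sum for `fibPoly (m + 1)` has one more term than `Ssum`, the constant `1`;
  -- it accounts for the extra `z` in `Q^k` when `k ≡ 1 (mod 4)`
  · rw [if_neg (by omega), show (2 * a + 1 + 1) / 2 = a + 1 by omega,
      show (2 * a + 1) / 2 = a by omega, sum_range_succ _ (a + 1),
      show 2 * a + 1 + 1 - (a + 1) = a + 1 by omega, Nat.choose_self,
      show 2 * a + 1 + 1 - 2 * (a + 1) = 0 by omega]
    simp only [Nat.cast_one, pow_zero, mul_one]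
    ring

/-- **Theorem 5**: the explicit three-term recurrence for the characteristic
polynomials of `T_k`, for odd `k ≥ 3`. -/
theorem Tk_three_term_recurrence (k : ℕ) (hk : 3 ≤ k) (hodd : Odd k)
    (n : ℕ) (hn : 2 ≤ n) (z : ℂ) :
    pT k n z = QT k z * pT k (n - 1) z +
      (-1 : ℂ) ^ ((k % 4) % 3) * pT k (n - 2) z := by
  obtain ⟨m, rfl⟩ : ∃ m, k = 2 * m + 3 := by obtain ⟨r, hr⟩ := hodd; exact ⟨r - 1, by omega⟩
  obtain ⟨n, rfl⟩ : ∃ n', n = n' + 2 := ⟨n - 2, by omega⟩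
  have hperiodic : Function.Periodic (fun i => (-1 : ℂ) ^ (i % (2 * m + 3))) (2 * m + 3) :=
    fun i => by simp only [Nat.add_mod_right]
  have hP : transferProd z (fun i => (-1) ^ (i % (2 * m + 3))) (2 * m + 3)
      = transferProd z (fun i => (-1) ^ i) (2 * (m + 1) + 1) :=
    transferProd_congr z _ fun i hi => by rw [Nat.mod_eq_of_lt hi]
  have hsign : (-1 : ℂ) ^ ((2 * m + 3) % 4 % 3) = -(-1) ^ (m + 1) := by
    have hmod : (2 * m + 3) % 4 % 3 = m % 2 := by
      rcases Nat.even_or_odd' m with ⟨a, rfl | rfl⟩ <;> omega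
    rw [hmod, ← neg_one_pow_eq_pow_mod_two, pow_succ]
    ring
  simp only [pT, det_smul_one_add_Tk, Nat.add_sub_cancel, show n + 2 - 1 = n + 1 by omega]
  rw [continuant_periodic_recurrence z _ hperiodic, hP, det_transferProd_neg_one_pow,
    show 2 * (m + 1) + 1 = 2 * m + 3 by ring, trace_transferProd_neg_one_pow,
    QT_two_mul_add_three, hsign]
  ring
end

section
/- Trace recurrence for the reduction matrices of T_k (appendix, equation (77)): for k ≥ 1 define the 2×2 matrix polynomial V_k(z) = ∏_{j=1}^{k} [[z, (−1)^j],[1, 0]] (product taken with the j = 1 factor leftmost) and set Q^k(z) = trace(V_k(z)). Then Q^1(z) = z, Q^3(z) = z³ − z, and for every k ≥ 1 and every z ∈ ℂ: Q^{k+4}(z) = z²·Q^{k+2}(z) + Q^k(z). -/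
/-!
Trace recurrence for the reduction matrices of `T_k` (appendix, equation (77)):
with `V_k(z) = ∏_{j=1}^{k} [[z, (−1)^j],[1, 0]]` (the `j = 1` factor leftmost) and
`Q^k(z) = trace (V_k(z))`, one has `Q^1(z) = z`, `Q^3(z) = z³ − z`, and
`Q^{k+4}(z) = z² · Q^{k+2}(z) + Q^k(z)` for all `k ≥ 1` and all `z ∈ ℂ`.
-/

open Matrix

/-- `V_k(z) = ∏_{j=1}^{k} [[z, (−1)^j],[1, 0]]`, the `j = 1` factor leftmost
(the list index `j` here runs over `0, …, k−1`, corresponding to `j+1` in the paper). -/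
noncomputable def Vk (k : ℕ) (z : ℂ) : Matrix (Fin 2) (Fin 2) ℂ :=
  ((List.range k).map (fun j => !![z, (-1 : ℂ) ^ (j + 1); 1, 0])).prod

/-- `Q^k(z) = trace (V_k(z))`. -/
noncomputable def QV (k : ℕ) (z : ℂ) : ℂ := (Vk k z).trace

lemma Vk_succ (k : ℕ) (z : ℂ) :
    Vk (k + 1) z = Vk k z * !![z, (-1 : ℂ) ^ (k + 1); 1, 0] := by
  simp [Vk, List.range_succ]

lemma pair_sq (z s : ℂ) (hs : s ^ 2 = 1) :
    (!![z, s; 1, 0] * !![z, -s; 1, 0]) * (!![z, s; 1, 0] * !![z, -s; 1, 0]) =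
      z ^ 2 • (!![z, s; 1, 0] * !![z, -s; 1, 0]) + 1 := by
  have h1 : s * s = 1 := by rw [← sq]; exact hs
  ext i j
  fin_cases i <;> fin_cases j <;>
    simp [Matrix.mul_apply, Fin.sum_univ_two, Matrix.one_apply]
  all_goals ring_nf
  all_goals linear_combination hs

lemma Vk_add_two (k : ℕ) (z : ℂ) :
    Vk (k + 2) z = Vk k z * (!![z, (-1 : ℂ) ^ (k + 1); 1, 0] *
      !![z, -((-1 : ℂ) ^ (k + 1)); 1, 0]) := by
  rw [Vk_succ, Vk_succ, Matrix.mul_assoc]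
  congr 2
  have : ((-1 : ℂ)) ^ (k + 1 + 1) = -((-1 : ℂ) ^ (k + 1)) := by ring
  rw [this]

/-- **Appendix, equation (77)**: `Q^1(z) = z`, `Q^3(z) = z³ − z`, and
`Q^{k+4}(z) = z² · Q^{k+2}(z) + Q^k(z)`. -/
theorem QV_trace_recurrence :
    (∀ z : ℂ, QV 1 z = z) ∧
    (∀ z : ℂ, QV 3 z = z ^ 3 - z) ∧
    (∀ k : ℕ, 1 ≤ k → ∀ z : ℂ, QV (k + 4) z = z ^ 2 * QV (k + 2) z + QV k z) := by
  refine ⟨?_, ?_, ?_⟩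
  · intro z
    simp [QV, Vk, List.range_succ, Matrix.trace_fin_two]
  · intro z
    simp [QV, Vk, List.range_succ, Matrix.trace_fin_two, Matrix.mul_apply,
      Fin.sum_univ_two]
    ring
  · intro k _ z
    set s : ℂ := (-1 : ℂ) ^ (k + 1) with hsdef
    have hs : s ^ 2 = 1 := by
      rw [hsdef, ← pow_mul, mul_comm, pow_mul]
      simp
    set D : Matrix (Fin 2) (Fin 2) ℂ := !![z, s; 1, 0] * !![z, -s; 1, 0] with hD
    have h2 : Vk (k + 2) z = Vk k z * D := Vk_add_two k z
    have h4 : Vk (k + 4) z = Vk (k + 2) z * D := by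
      have := Vk_add_two (k + 2) z
      rw [show k + 2 + 2 = k + 4 from rfl] at this
      have hp : ((-1 : ℂ)) ^ (k + 2 + 1) = s := by
        rw [hsdef, show k + 2 + 1 = (k + 1) + 2 from rfl, pow_add]; ring
      rw [hp] at this
      rw [this]
    have key : Vk (k + 4) z = z ^ 2 • Vk (k + 2) z + Vk k z := by
      rw [h4, h2, Matrix.mul_assoc, pair_sq z s hs]
      rw [Matrix.mul_add, Matrix.mul_one, Matrix.mul_smul, ← h2]
    simp only [QV, key, Matrix.trace_add, Matrix.trace_smul, smul_eq_mul]
end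

section
/- Three-term recurrence for determinants of tridiagonal k-Toeplitz matrices (appendix, equation (81)): with D_0 := 1 and D_n := det(M_{nk}) for n ≥ 1, the determinants satisfy D_{n+1} = Q^k(0)·D_n − (u_1·u_2⋯u_k)·D_{n−1} for every n ≥ 1, where Q^k(0) = trace(U_k(0)) = trace( [[a_1, −u_1],[1,0]]·[[a_2, −u_2],[1,0]]···[[a_k, −u_k],[1,0]] ). -/
/-!
Three-term recurrence for determinants of tridiagonal `k`-Toeplitz matrices
(appendix, equation (81)): with `D_0 := 1` and `D_n := det(M_{nk})` for `n ≥ 1`,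
`D_{n+1} = Q^k(0) · D_n − (u_1 ⋯ u_k) · D_{n−1}` for every `n ≥ 1`, where
`Q^k(0) = trace (U_k(0))`.
-/

open Matrix

/-- `D_n = det (M_{nk})`; in particular `D_0 = 1` (determinant of the empty matrix). -/
noncomputable def Ddet (k : ℕ) (a x y : ℕ → ℂ) (n : ℕ) : ℂ :=
  (kToeplitz k a x y (n * k)).det

/-!
Expanding along the last row, the leading minors `d_m` of a tridiagonal matrix satisfy
`d_{m+2} = a_{m+1} d_{m+1} - u_m d_m`, i.e. right multiplication by `U₁(a_m, u_m)(0)` sends the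
row vector `(d_m, -u_{m-1} d_{m-1})` to the next one. Over one period of the `k`-Toeplitz matrix
this is right multiplication by `U = U_k(0)`, and Cayley–Hamilton, `U² = tr U • U - det U • 1`
with `det U = u_1 ⋯ u_k`, turns two periods into the recurrence.
-/

section Tridiagonal

variable {R : Type*} [CommRing R] (a x y : ℕ → R)

def tridiagonal (N : ℕ) : Matrix (Fin N) (Fin N) R :=
  of fun i j =>
    if (i : ℕ) = j then a i
    else if (j : ℕ) = i + 1 then x i
    else if (i : ℕ) = j + 1 then y j
    else 0

theorem tridiagonal_submatrix_castSucc (N : ℕ) :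
    (tridiagonal a x y (N + 1)).submatrix Fin.castSucc Fin.castSucc = tridiagonal a x y N :=
  rfl

theorem det_tridiagonal_zero : (tridiagonal a x y 0).det = 1 :=
  det_isEmpty

theorem det_tridiagonal_one : (tridiagonal a x y 1).det = a 0 := by
  simp [tridiagonal]

theorem tridiagonal_apply_eq_zero {N : ℕ} {i j : Fin N} (h : (i : ℕ) + 1 < j ∨ (j : ℕ) + 1 < i) :
    tridiagonal a x y N i j = 0 := by
  simp only [tridiagonal, of_apply]
  rw [if_neg, if_neg, if_neg] <;> omega

theorem det_tridiagonal_submatrix_castSucc_succAbove (m : ℕ) :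
    ((tridiagonal a x y (m + 2)).submatrix Fin.castSucc
      (Fin.last m).castSucc.succAbove).det = x m * (tridiagonal a x y m).det := by
  have hcol : ∀ i : Fin m, tridiagonal a x y (m + 2) i.castSucc.castSucc (Fin.last m).succ = 0 :=
    fun i => tridiagonal_apply_eq_zero a x y (Or.inl (by simp))
  have hminor : ((tridiagonal a x y (m + 2)).submatrix Fin.castSucc
      (Fin.last m).castSucc.succAbove).submatrix (Fin.last m).succAbove (Fin.last m).succAbove =
      tridiagonal a x y m := by
    ext i j
    simp [tridiagonal, Fin.succAbove_castSucc_of_lt]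
  rw [det_succ_column _ (Fin.last m), Fin.sum_univ_castSucc]
  simp only [submatrix_apply, Fin.succAbove_castSucc_self, hcol, mul_zero, zero_mul,
    Finset.sum_const_zero, zero_add, hminor]
  simp [tridiagonal]

theorem det_tridiagonal_succ_succ (m : ℕ) :
    (tridiagonal a x y (m + 2)).det =
      a (m + 1) * (tridiagonal a x y (m + 1)).det - x m * y m * (tridiagonal a x y m).det := by
  have hrow : ∀ j : Fin m, tridiagonal a x y (m + 2) (Fin.last (m + 1)) j.castSucc.castSucc = 0 :=
    fun j => tridiagonal_apply_eq_zero a x y (Or.inr (by simp))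
  have hy : tridiagonal a x y (m + 2) (Fin.last (m + 1)) (Fin.last m).castSucc = y m := by
    simp only [tridiagonal, of_apply, Fin.val_last, Fin.val_castSucc]
    rw [if_neg (by omega), if_neg (by omega), if_true]
  have ha : tridiagonal a x y (m + 2) (Fin.last (m + 1)) (Fin.last (m + 1)) = a (m + 1) := by
    simp [tridiagonal]
  rw [det_succ_row _ (Fin.last (m + 1)), Fin.sum_univ_castSucc, Fin.sum_univ_castSucc]
  simp only [hrow, hy, ha, mul_zero, zero_mul, Finset.sum_const_zero, zero_add, Fin.succAbove_last,
    det_tridiagonal_submatrix_castSucc_succAbove, tridiagonal_submatrix_castSucc,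
    Fin.val_last, Fin.val_castSucc,
    (Odd.neg_one_pow ⟨m, by ring⟩ : (-1 : R) ^ (m + 1 + m) = -1),
    (Even.neg_one_pow ⟨_, rfl⟩ : (-1 : R) ^ (m + 1 + (m + 1)) = 1)]
  ring

end Tridiagonal

theorem kToeplitz_eq_tridiagonal (k : ℕ) (a x y : ℕ → ℂ) (N : ℕ) :
    kToeplitz k a x y N =
      tridiagonal (fun i => a (i % k)) (fun i => x (i % k)) (fun i => y (i % k)) N :=
  rfl

theorem det_U1 (a u z : ℂ) : (U1 a u z).det = u := by
  simp [U1, det_fin_two_of]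

theorem det_Uk (k : ℕ) (a x y : ℕ → ℂ) (z : ℂ) :
    (Uk k a x y z).det = ∏ j ∈ Finset.range k, x j * y j := by
  induction k with
  | zero => simp [Uk]
  | succ k ih => rw [Uk, List.prod_range_succ, det_mul, ← Uk, ih, det_U1, Finset.prod_range_succ]

theorem Uk_eq_prod_mul_add_mod (k j : ℕ) (a x y : ℕ → ℂ) (z : ℂ) :
    Uk k a x y z = ((List.range k).map fun i =>
      U1 (a ((j * k + i) % k)) (x ((j * k + i) % k) * y ((j * k + i) % k)) z).prod := by
  refine congrArg List.prod (List.map_congr_left fun i hi => ?_)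
  rw [Nat.mul_add_mod_of_lt (List.mem_range.mp hi)]

def transferRow (u D : ℕ → ℂ) : ℕ → Fin 2 → ℂ
  | 0 => ![D 0, 0]
  | m + 1 => ![D (m + 1), -(u m * D m)]

theorem transferRow_apply_zero (u D : ℕ → ℂ) (m : ℕ) : transferRow u D m 0 = D m := by
  cases m <;> rfl

section Transfer

variable {a u D : ℕ → ℂ}

theorem transferRow_vecMul_U1 (h₁ : D 1 = a 0 * D 0)
    (hrec : ∀ m, D (m + 2) = a (m + 1) * D (m + 1) - u m * D m) (m : ℕ) :
    transferRow u D m ᵥ* U1 (a m) (u m) 0 = transferRow u D (m + 1) := by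
  ext i
  fin_cases i <;> cases m <;>
    simp [transferRow, U1, vecMul, dotProduct, Fin.sum_univ_two, h₁, hrec] <;> ring

theorem transferRow_vecMul_prod (h₁ : D 1 = a 0 * D 0)
    (hrec : ∀ m, D (m + 2) = a (m + 1) * D (m + 1) - u m * D m) (m t : ℕ) :
    transferRow u D m ᵥ* ((List.range t).map fun j => U1 (a (m + j)) (u (m + j)) 0).prod =
      transferRow u D (m + t) := by
  induction t with
  | zero => simp
  | succ t ih =>
    rw [List.prod_range_succ, ← vecMul_vecMul, ih, transferRow_vecMul_U1 h₁ hrec, add_assoc]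

theorem transferRow_tridiagonal_vecMul_prod (a x y : ℕ → ℂ) (m t : ℕ) :
    transferRow (fun i => x i * y i) (fun N => (tridiagonal a x y N).det) m ᵥ*
        ((List.range t).map fun j => U1 (a (m + j)) (x (m + j) * y (m + j)) 0).prod =
      transferRow (fun i => x i * y i) (fun N => (tridiagonal a x y N).det) (m + t) :=
  transferRow_vecMul_prod (by simp only [det_tridiagonal_one, det_tridiagonal_zero, mul_one])
    (det_tridiagonal_succ_succ a x y) m t

end Transfer

theorem Matrix.sq_eq_trace_smul_sub_det_smul_one {R : Type*} [CommRing R]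
    (M : Matrix (Fin 2) (Fin 2) R) : M ^ 2 = M.trace • M - M.det • 1 := by
  nontriviality R
  have h := M.aeval_self_charpoly
  rw [charpoly_fin_two] at h
  simp only [map_add, map_sub, map_pow, map_mul, Polynomial.aeval_X, Polynomial.aeval_C,
    Algebra.algebraMap_eq_smul_one, smul_mul_assoc, one_mul] at h
  rw [← sub_eq_zero, ← h]
  abel

theorem vecMul_vecMul_fin_two {R : Type*} [CommRing R] (v : Fin 2 → R)
    (M : Matrix (Fin 2) (Fin 2) R) :
    v ᵥ* M ᵥ* M = M.trace • (v ᵥ* M) - M.det • v := by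
  rw [vecMul_vecMul, ← sq, sq_eq_trace_smul_sub_det_smul_one, vecMul_sub, vecMul_smul, vecMul_smul,
    vecMul_one]

theorem kToeplitz_det_three_term_recurrence_general
    (k : ℕ) (a x y : ℕ → ℂ) (n : ℕ) (hn : 1 ≤ n) :
    Ddet k a x y (n + 1) =
      (Uk k a x y 0).trace * Ddet k a x y n -
        (∏ j ∈ Finset.range k, x j * y j) * Ddet k a x y (n - 1) := by
  obtain ⟨m, rfl⟩ := Nat.exists_eq_add_of_le' hn
  set v := transferRow (fun i => x (i % k) * y (i % k)) fun N =>
    (tridiagonal (fun i => a (i % k)) (fun i => x (i % k)) (fun i => y (i % k)) N).det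
  have hperiod : ∀ j, v (j * k) ᵥ* Uk k a x y 0 = v ((j + 1) * k) := fun j => by
    rw [Uk_eq_prod_mul_add_mod k j, add_one_mul]
    exact transferRow_tridiagonal_vecMul_prod _ _ _ (j * k) k
  have h := congrFun (vecMul_vecMul_fin_two (v (m * k)) (Uk k a x y 0)) 0
  rw [hperiod, hperiod] at h
  simpa [Ddet, kToeplitz_eq_tridiagonal, v, transferRow_apply_zero, det_Uk] using h

/-- **Appendix, equation (81)**: `D_{n+1} = Q^k(0) · D_n − (u_1 ⋯ u_k) · D_{n−1}`. -/
theorem kToeplitz_det_three_term_recurrence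
    (k : ℕ) (hk : 1 ≤ k) (a x y : ℕ → ℂ) (n : ℕ) (hn : 1 ≤ n) :
    Ddet k a x y (n + 1) =
      (Uk k a x y 0).trace * Ddet k a x y n -
        (∏ j ∈ Finset.range k, x j * y j) * Ddet k a x y (n - 1) :=
  kToeplitz_det_three_term_recurrence_general k a x y n hn
end
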